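/- Let d ≥ 1, δ > 0, θ ∈ ℝ^d. Let Z be a measurable space, ℓ : ℝ^d × Z → ℝ a bounded measurable loss such that θ ↦ ℓ(θ; z) is μ-Lipschitz for every z ∈ Z. Let Π be a probability measure on Z with Var_{Z∼Π}[ℓ(θ; Z)] ≥ σ² for some σ > 0, let Z₁, Z₂ be independent random variables each with law Π, and let u ∼ Unif(𝕊^{d−1}) be independent of (Z₁, Z₂). Then the two-point gradient estimator g := (d/δ)(ℓ(θ + δ u; Z₁) − ℓ(θ; Z₂)) u satisfies E‖g‖² ≥ (3/2)σ² d²/δ² − 3 μ² d². -/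

import Mathlib

/-!
Write `ℓ(θ + δu; Z₁) - ℓ(θ; Z₂) = a + b` with `a = ℓ(θ; Z₁) - ℓ(θ; Z₂)` and `|b| ≤ μδ` by the
Lipschitz bound. As `‖u‖ = 1`, `‖g‖² = (d/δ)² (a + b)² ≥ (d/δ)² (¾ a² - 3 b²)`, and `E[a²]` is twice
the variance of `ℓ(θ; Z)` because `Z₁, Z₂` are independent copies.
-/

open MeasureTheory Metric

/-- The uniform probability distribution on the unit sphere of `ℝ^d`. -/
noncomputable def unifSphere (d : ℕ) : Measure (sphere (0 : EuclideanSpace ℝ (Fin d)) 1) :=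
  ((volume : Measure (EuclideanSpace ℝ (Fin d))).toSphere Set.univ)⁻¹ •
    (volume : Measure (EuclideanSpace ℝ (Fin d))).toSphere

open ProbabilityTheory

instance unifSphere.instIsProbabilityMeasure (d : ℕ) [NeZero d] :
    IsProbabilityMeasure (unifSphere d) :=
  have : NeZero (volume : Measure (EuclideanSpace ℝ (Fin d))).toSphere :=
    ⟨Measure.toSphere_ne_zero _⟩
  isProbabilityMeasureSMul

lemma integral_sq_sub_prod_self {Z : Type*} [MeasurableSpace Z] {P : Measure Z}
    [IsProbabilityMeasure P] {f : Z → ℝ} (hf : MemLp f 2 P) :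
    ∫ q, (f q.1 - f q.2) ^ 2 ∂(P.prod P) = 2 * Var[f; P] := by
  have hmean : ∫ q, (f q.1 - f q.2) ∂(P.prod P) = 0 := by
    rw [integral_sub ((hf.integrable one_le_two).comp_fst P)
      ((hf.integrable one_le_two).comp_snd P), integral_fun_fst, integral_fun_snd]
    simp
  rw [← variance_of_integral_eq_zero (X := fun q : Z × Z => f q.1 - f q.2)
    ((hf.comp_fst P).aemeasurable.sub (hf.comp_snd P).aemeasurable) hmean]
  simpa [sub_eq_add_neg, two_mul, variance_neg] using variance_add_prod hf hf.neg

lemma three_div_four_mul_sq_sub_three_mul_sq_le_sq_add (a b : ℝ) :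
    3 / 4 * a ^ 2 - 3 * b ^ 2 ≤ (a + b) ^ 2 := by
  nlinarith [sq_nonneg (a + 4 * b)]

section TwoPoint

variable {E Z : Type*} [NormedAddCommGroup E] [NormedSpace ℝ E]

/-- The paper's estimator `g` is `twoPointEstimator ℓ θ δ (d / δ) u Z₁ Z₂`. -/
noncomputable def twoPointEstimator (ℓ : E → Z → ℝ) (θ : E) (δ c : ℝ) (u : E) (z₁ z₂ : Z) : E :=
  c • ((ℓ (θ + δ • u) z₁ - ℓ θ z₂) • u)

lemma norm_twoPointEstimator_sq (ℓ : E → Z → ℝ) (θ : E) (δ c : ℝ) {u : E} (hu : ‖u‖ = 1)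
    (z₁ z₂ : Z) :
    ‖twoPointEstimator ℓ θ δ c u z₁ z₂‖ ^ 2 = c ^ 2 * (ℓ (θ + δ • u) z₁ - ℓ θ z₂) ^ 2 := by
  rw [twoPointEstimator, norm_smul, norm_smul, hu, mul_one, mul_pow, Real.norm_eq_abs,
    Real.norm_eq_abs, sq_abs, sq_abs]

lemma le_norm_twoPointEstimator_sq {ℓ : E → Z → ℝ} {K : ℝ}
    (hℓ : ∀ z x y, |ℓ x z - ℓ y z| ≤ K * ‖x - y‖) (θ : E) (δ c : ℝ) {u : E} (hu : ‖u‖ = 1)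
    (z₁ z₂ : Z) :
    3 / 4 * c ^ 2 * (ℓ θ z₁ - ℓ θ z₂) ^ 2 - 3 * K ^ 2 * (c * δ) ^ 2 ≤
      ‖twoPointEstimator ℓ θ δ c u z₁ z₂‖ ^ 2 := by
  have hincr : |ℓ (θ + δ • u) z₁ - ℓ θ z₁| ≤ K * |δ| := by
    simpa [norm_smul, hu] using hℓ z₁ (θ + δ • u) θ
  have hincr_sq : (ℓ (θ + δ • u) z₁ - ℓ θ z₁) ^ 2 ≤ K ^ 2 * δ ^ 2 := by
    simpa [mul_pow] using sq_le_sq' (abs_le.mp hincr).1 (abs_le.mp hincr).2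
  have hsplit : ℓ (θ + δ • u) z₁ - ℓ θ z₂ =
      (ℓ θ z₁ - ℓ θ z₂) + (ℓ (θ + δ • u) z₁ - ℓ θ z₁) := by ring
  rw [norm_twoPointEstimator_sq ℓ θ δ c hu, hsplit]
  calc _ ≤ c ^ 2 * (3 / 4 * (ℓ θ z₁ - ℓ θ z₂) ^ 2 - 3 * (ℓ (θ + δ • u) z₁ - ℓ θ z₁) ^ 2) := by
        nlinarith [mul_le_mul_of_nonneg_left hincr_sq (sq_nonneg c)]
    _ ≤ _ := mul_le_mul_of_nonneg_left
        (three_div_four_mul_sq_sub_three_mul_sq_le_sq_add _ _) (sq_nonneg c)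

theorem le_integral_norm_twoPointEstimator_sq [MeasurableSpace E] [BorelSpace E]
    [MeasurableSpace Z]
    (ν : Measure (sphere (0 : E) 1)) [IsProbabilityMeasure ν]
    (P : Measure Z) [IsProbabilityMeasure P] {ℓ : E → Z → ℝ}
    (hmeas : Measurable (Function.uncurry ℓ)) {K : ℝ}
    (hLip : ∀ z x y, |ℓ x z - ℓ y z| ≤ K * ‖x - y‖) {θ : E} (hθ : MemLp (ℓ θ) 2 P) (δ c : ℝ) :
    3 / 2 * c ^ 2 * Var[ℓ θ; P] - 3 * K ^ 2 * (c * δ) ^ 2 ≤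
      ∫ p, ‖twoPointEstimator ℓ θ δ c p.1 p.2.1 p.2.2‖ ^ 2 ∂(ν.prod (P.prod P)) := by
  have hdiff : MemLp (fun q : Z × Z => ℓ θ q.1 - ℓ θ q.2) 2 (P.prod P) :=
    (hθ.comp_fst P).sub (hθ.comp_snd P)
  have hincr : MemLp (fun p : sphere (0 : E) 1 × Z × Z =>
      ℓ (θ + δ • (p.1 : E)) p.2.1 - ℓ θ p.2.1) 2 (ν.prod (P.prod P)) := by
    refine MemLp.of_bound (by fun_prop) (K * |δ|) (ae_of_all _ fun p => ?_)
    simpa [norm_smul] using hLip p.2.1 (θ + δ • (p.1 : E)) θ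
  have hlow_int : Integrable (fun p : sphere (0 : E) 1 × Z × Z =>
      3 / 4 * c ^ 2 * (ℓ θ p.2.1 - ℓ θ p.2.2) ^ 2 - 3 * K ^ 2 * (c * δ) ^ 2)
      (ν.prod (P.prod P)) :=
    ((hdiff.integrable_sq.comp_snd ν).const_mul _).sub (integrable_const _)
  have hup_int : Integrable (fun p : sphere (0 : E) 1 × Z × Z =>
      ‖twoPointEstimator ℓ θ δ c p.1 p.2.1 p.2.2‖ ^ 2) (ν.prod (P.prod P)) := by
    refine ((hincr.add (hdiff.comp_snd ν)).integrable_sq.const_mul (c ^ 2)).congr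
      (ae_of_all _ fun p => ?_)
    dsimp only [Pi.add_apply]
    rw [norm_twoPointEstimator_sq ℓ θ δ c (norm_eq_of_mem_sphere p.1)]
    ring
  calc 3 / 2 * c ^ 2 * Var[ℓ θ; P] - 3 * K ^ 2 * (c * δ) ^ 2
      = ∫ p : sphere (0 : E) 1 × Z × Z,
          3 / 4 * c ^ 2 * (ℓ θ p.2.1 - ℓ θ p.2.2) ^ 2 - 3 * K ^ 2 * (c * δ) ^ 2
          ∂(ν.prod (P.prod P)) := by
        rw [integral_fun_snd (fun q : Z × Z =>
            3 / 4 * c ^ 2 * (ℓ θ q.1 - ℓ θ q.2) ^ 2 - 3 * K ^ 2 * (c * δ) ^ 2),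
          integral_sub (hdiff.integrable_sq.const_mul _) (integrable_const _),
          integral_const_mul, integral_sq_sub_prod_self hθ]
        simp only [probReal_univ, integral_const, smul_eq_mul, one_mul]
        ring
    _ ≤ _ := integral_mono hlow_int hup_int fun p =>
        le_norm_twoPointEstimator_sq hLip θ δ c (norm_eq_of_mem_sphere p.1) _ _

end TwoPoint

theorem stmt15_general (d : ℕ) (hd : 1 ≤ d) (δ : ℝ) (hδ : 0 < δ)
    (θ : EuclideanSpace ℝ (Fin d)) {Z : Type*} [MeasurableSpace Z]
    (ℓ : EuclideanSpace ℝ (Fin d) → Z → ℝ)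
    (hℓmeas : Measurable (Function.uncurry ℓ))
    (hℓbdd : ∃ G : ℝ, ∀ θ' z, |ℓ θ' z| ≤ G)
    (μLip : ℝ) (hℓLip : ∀ (z : Z) (θ₁ θ₂ : EuclideanSpace ℝ (Fin d)),
      |ℓ θ₁ z - ℓ θ₂ z| ≤ μLip * ‖θ₁ - θ₂‖)
    (PZ : Measure Z) [IsProbabilityMeasure PZ]
    (σ : ℝ)
    (hVar : σ ^ 2 ≤ ∫ z, (ℓ θ z - ∫ z', ℓ θ z' ∂PZ) ^ 2 ∂PZ) :
    (3 / 2) * σ ^ 2 * (d : ℝ) ^ 2 / δ ^ 2 - 3 * μLip ^ 2 * (d : ℝ) ^ 2 ≤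
      ∫ p : (sphere (0 : EuclideanSpace ℝ (Fin d)) 1) × (Z × Z),
        ‖((d : ℝ) / δ) •
          ((ℓ (θ + δ • (p.1 : EuclideanSpace ℝ (Fin d))) p.2.1 - ℓ θ p.2.2) •
            (p.1 : EuclideanSpace ℝ (Fin d)))‖ ^ 2
        ∂((unifSphere d).prod (PZ.prod PZ)) := by
  have : NeZero d := ⟨by omega⟩
  obtain ⟨G, hG⟩ := hℓbdd
  have hθ : MemLp (ℓ θ) 2 PZ :=
    .of_bound hℓmeas.of_uncurry_left.aestronglyMeasurable G (ae_of_all _ (hG θ))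
  rw [← variance_eq_integral hθ.aemeasurable] at hVar
  refine le_trans ?_
    (le_integral_norm_twoPointEstimator_sq (unifSphere d) PZ hℓmeas hℓLip hθ δ (d / δ))
  rw [div_mul_cancel₀ _ hδ.ne', show 3 / 2 * σ ^ 2 * (d : ℝ) ^ 2 / δ ^ 2
    = 3 / 2 * (d / δ) ^ 2 * σ ^ 2 by ring]
  gcongr

/-- variance lower bound for the two-sample two-point estimator: with
`u ∼ Unif(𝕊^{d−1})` independent of i.i.d. `Z₁, Z₂ ∼ Π`, the estimator
`g = (d/δ)(ℓ(θ+δu;Z₁) − ℓ(θ;Z₂))u` satisfies `E‖g‖² ≥ (3/2)σ²d²/δ² − 3μ²d²`,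
whenever `Var_{Z∼Π}[ℓ(θ;Z)] ≥ σ²` and `ℓ` is `μ`-Lipschitz in `θ`. -/
theorem stmt15 (d : ℕ) (hd : 1 ≤ d) (δ : ℝ) (hδ : 0 < δ)
    (θ : EuclideanSpace ℝ (Fin d)) {Z : Type*} [MeasurableSpace Z]
    (ℓ : EuclideanSpace ℝ (Fin d) → Z → ℝ)
    (hℓmeas : Measurable (Function.uncurry ℓ))
    (hℓbdd : ∃ G : ℝ, ∀ θ' z, |ℓ θ' z| ≤ G)
    (μLip : ℝ) (hℓLip : ∀ (z : Z) (θ₁ θ₂ : EuclideanSpace ℝ (Fin d)),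
      |ℓ θ₁ z - ℓ θ₂ z| ≤ μLip * ‖θ₁ - θ₂‖)
    (PZ : Measure Z) [IsProbabilityMeasure PZ]
    (σ : ℝ) (hσ : 0 < σ)
    (hVar : σ ^ 2 ≤ ∫ z, (ℓ θ z - ∫ z', ℓ θ z' ∂PZ) ^ 2 ∂PZ) :
    (3 / 2) * σ ^ 2 * (d : ℝ) ^ 2 / δ ^ 2 - 3 * μLip ^ 2 * (d : ℝ) ^ 2 ≤
      ∫ p : (sphere (0 : EuclideanSpace ℝ (Fin d)) 1) × (Z × Z),
        ‖((d : ℝ) / δ) •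
          ((ℓ (θ + δ • (p.1 : EuclideanSpace ℝ (Fin d))) p.2.1 - ℓ θ p.2.2) •
            (p.1 : EuclideanSpace ℝ (Fin d)))‖ ^ 2
        ∂((unifSphere d).prod (PZ.prod PZ)) :=
  stmt15_general d hd δ hδ θ ℓ hℓmeas hℓbdd μLip hℓLip PZ σ hVar
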